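/- arXiv:2505.00782 — 2 statements merged into one kernel-verified Lean document; each statement's English description precedes it below -/
import Mathlib

section
/- Let n, p ≥ 1, let t₀ ≤ t_f be real numbers, and let A : ℝ → ℝ^{n×n} and B : ℝ → ℝ^{n×p} be continuous on [t₀, t_f]. Suppose s : ℝ → ℝ^{n×p} is differentiable on [t₀, t_f] and satisfies the variational (sensitivity) equation s'(t) = A(t)·s(t) + B(t), and a : ℝ → ℝⁿ is differentiable on [t₀, t_f] and satisfies the adjoint equation a'(t) = −A(t)ᵀ·a(t). Then for every t ∈ [t₀, t_f], the derivative of the map t ↦ a(t)ᵀ·s(t) ∈ ℝ^{1×p} equals a(t)ᵀ·B(t); that is, d/dt (a(t)ᵀ s(t)) = a(t)ᵀ B(t). -/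
attribute [local instance] Matrix.normedAddCommGroup Matrix.normedSpace

open Matrix

theorem HasDerivWithinAt.vecMul {𝕜 : Type*} [NontriviallyNormedField 𝕜] [CompleteSpace 𝕜]
    {m n : Type*} [Fintype m] [Fintype n] {a : 𝕜 → m → 𝕜} {M : 𝕜 → Matrix m n 𝕜}
    {a' : m → 𝕜} {M' : Matrix m n 𝕜} {S : Set 𝕜} {t : 𝕜}
    (ha : HasDerivWithinAt a a' S t) (hM : HasDerivWithinAt M M' S t) :
    HasDerivWithinAt (fun τ => a τ ᵥ* M τ) (a' ᵥ* M t + a t ᵥ* M') S t := by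
  rw [add_comm]
  exact (vecMulBilin 𝕜 𝕜).toContinuousBilinearMap.hasDerivWithinAt_of_bilinear ha hM

theorem neg_mulVec_transpose_vecMul_add_vecMul_mul_add {R : Type*} [CommRing R]
    {n p : Type*} [Fintype n] (A : Matrix n n R) (B s : Matrix n p R) (a : n → R) :
    -(Aᵀ *ᵥ a) ᵥ* s + a ᵥ* (A * s + B) = a ᵥ* B := by
  rw [mulVec_transpose, neg_vecMul, vecMul_vecMul, vecMul_add]
  abel

theorem stmt_7_general (n p : ℕ) (t₀ tf : ℝ)
    (A : ℝ → Matrix (Fin n) (Fin n) ℝ) (B : ℝ → Matrix (Fin n) (Fin p) ℝ)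
    (s : ℝ → Matrix (Fin n) (Fin p) ℝ)
    (hs : ∀ t ∈ Set.Icc t₀ tf, HasDerivWithinAt s (A t * s t + B t) (Set.Icc t₀ tf) t)
    (a : ℝ → Fin n → ℝ)
    (ha : ∀ t ∈ Set.Icc t₀ tf,
      HasDerivWithinAt a (-(Matrix.mulVec (Matrix.transpose (A t)) (a t))) (Set.Icc t₀ tf) t) :
    ∀ t ∈ Set.Icc t₀ tf,
      HasDerivWithinAt (fun τ => Matrix.vecMul (a τ) (s τ))
        (Matrix.vecMul (a t) (B t)) (Set.Icc t₀ tf) t := fun t ht =>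
  neg_mulVec_transpose_vecMul_add_vecMul_mul_add (A t) (B t) (s t) (a t) ▸
    (ha t ht).vecMul (hs t ht)

/-- If `s` solves the variational equation `s' = A s + B` and `a` solves the adjoint
equation `a' = −Aᵀ a` on `[t₀, t_f]`, then `d/dt (aᵀ s) = aᵀ B` on `[t₀, t_f]`. -/
theorem stmt_7 (n p : ℕ) (hn : 1 ≤ n) (hp : 1 ≤ p) (t₀ tf : ℝ) (ht : t₀ ≤ tf)
    (A : ℝ → Matrix (Fin n) (Fin n) ℝ) (B : ℝ → Matrix (Fin n) (Fin p) ℝ)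
    (hA : ContinuousOn A (Set.Icc t₀ tf)) (hB : ContinuousOn B (Set.Icc t₀ tf))
    (s : ℝ → Matrix (Fin n) (Fin p) ℝ)
    (hs : ∀ t ∈ Set.Icc t₀ tf, HasDerivWithinAt s (A t * s t + B t) (Set.Icc t₀ tf) t)
    (a : ℝ → Fin n → ℝ)
    (ha : ∀ t ∈ Set.Icc t₀ tf,
      HasDerivWithinAt a (-(Matrix.mulVec (Matrix.transpose (A t)) (a t))) (Set.Icc t₀ tf) t) :
    ∀ t ∈ Set.Icc t₀ tf,
      HasDerivWithinAt (fun τ => Matrix.vecMul (a τ) (s τ))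
        (Matrix.vecMul (a t) (B t)) (Set.Icc t₀ tf) t :=
  stmt_7_general n p t₀ tf A B s hs a ha
end

section
/- Let n, p ≥ 1, let t₀ ≤ t_f be real numbers, and let A : ℝ → ℝ^{n×n} and B : ℝ → ℝ^{n×p} be continuous on [t₀, t_f]. Let X : ℝᵖ → ℝⁿ be a map (the final state of the trajectory as a function of the parameter vector μ) that is differentiable at μ₀ ∈ ℝᵖ, and suppose its derivative DX(μ₀) ∈ ℝ^{n×p} equals s(t_f), where s : ℝ → ℝ^{n×p} is differentiable on [t₀, t_f] with s(t₀) = 0 and s'(t) = A(t)·s(t) + B(t). Let L : ℝⁿ → ℝ be differentiable at X(μ₀), and let a : ℝ → ℝⁿ be differentiable on [t₀, t_f] with a'(t) = −A(t)ᵀ·a(t) and terminal condition a(t_f) = ∇L(X(μ₀)). Then the composite loss F = L ∘ X : ℝᵖ → ℝ is differentiable at μ₀ and its gradient satisfies ∇F(μ₀)ᵀ = ∫_{t₀}^{t_f} a(t)ᵀ·B(t) dt. -/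
attribute [local instance] Matrix.normedAddCommGroup Matrix.normedSpace

/-! The pairing `a(t)ᵀ s(t)` of the adjoint state with the sensitivity has derivative
`(-Aᵀ a)ᵀ s + aᵀ (A s + B) = aᵀ B`: the `A`-terms cancel. Integrating over `[t₀, t_f]` and using
`s(t₀) = 0` gives `∫ aᵀ B = a(t_f)ᵀ s(t_f)`, and since `a(t_f) = ∇L(X μ₀)` and `DX(μ₀) = s(t_f)`,
the chain rule identifies the right-hand side with the gradient of `L ∘ X` at `μ₀`. -/

open Matrix Set

section

variable {𝕜 : Type*} [NontriviallyNormedField 𝕜] {m n p : Type*} [Fintype m] [Fintype n]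
  [Fintype p]

theorem HasDerivWithinAt.matrix_vecMul [CompleteSpace 𝕜] {a : 𝕜 → m → 𝕜}
    {M : 𝕜 → Matrix m n 𝕜} {a' : m → 𝕜} {M' : Matrix m n 𝕜} {S : Set 𝕜} {t : 𝕜}
    (ha : HasDerivWithinAt a a' S t) (hM : HasDerivWithinAt M M' S t) :
    HasDerivWithinAt (fun t => a t ᵥ* M t) (a t ᵥ* M' + a' ᵥ* M t) S t :=
  (vecMulBilin 𝕜 𝕜 : (m → 𝕜) →ₗ[𝕜] Matrix m n 𝕜 →ₗ[𝕜] n → 𝕜).toContinuousBilinearMap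
    |>.hasDerivWithinAt_of_bilinear ha hM

theorem ContinuousOn.matrix_vecMul [CompleteSpace 𝕜] {X : Type*} [TopologicalSpace X]
    {a : X → m → 𝕜} {M : X → Matrix m n 𝕜} {S : Set X} (ha : ContinuousOn a S)
    (hM : ContinuousOn M S) :
    ContinuousOn (fun x => a x ᵥ* M x) S :=
  (vecMulBilin 𝕜 𝕜 : (m → 𝕜) →ₗ[𝕜] Matrix m n 𝕜 →ₗ[𝕜] n → 𝕜).toContinuousBilinearMap
    |>.continuous₂.comp_continuousOn (ha.prodMk hM)

theorem hasDerivWithinAt_vecMul_of_adjoint [CompleteSpace 𝕜] {a : 𝕜 → n → 𝕜}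
    {s : 𝕜 → Matrix n p 𝕜} {A : Matrix n n 𝕜} {B : Matrix n p 𝕜} {S : Set 𝕜} {t : 𝕜}
    (ha : HasDerivWithinAt a (-(Aᵀ *ᵥ a t)) S t) (hs : HasDerivWithinAt s (A * s t + B) S t) :
    HasDerivWithinAt (fun t => a t ᵥ* s t) (a t ᵥ* B) S t := by
  convert ha.matrix_vecMul hs using 1
  rw [mulVec_transpose, vecMul_add, neg_vecMul, vecMul_vecMul]
  abel

theorem ContinuousLinearMap.apply_eq_dotProduct {R : Type*} [Semiring R] [TopologicalSpace R]
    [DecidableEq m] (ℓ : (m → R) →L[R] R) (w : m → R) :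
    ℓ w = w ⬝ᵥ fun i => ℓ (Pi.single i 1) := by
  conv_lhs => rw [pi_eq_sum_univ' w, map_sum]
  simp [dotProduct]

theorem fderiv_comp_apply_single_eq_vecMul [DecidableEq m] [DecidableEq n]
    {L : (m → 𝕜) → 𝕜} {X : (n → 𝕜) → m → 𝕜} {μ₀ : n → 𝕜} {S : Matrix m n 𝕜}
    (hL : DifferentiableAt 𝕜 L (X μ₀)) (hX : DifferentiableAt 𝕜 X μ₀)
    (hDX : ∀ v, fderiv 𝕜 X μ₀ v = S *ᵥ v) :
    (fun j => fderiv 𝕜 (fun μ => L (X μ)) μ₀ (Pi.single j 1)) =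
      (fun i => fderiv 𝕜 L (X μ₀) (Pi.single i 1)) ᵥ* S := by
  ext j
  rw [fderiv_fun_comp μ₀ hL hX, ContinuousLinearMap.comp_apply, hDX,
    ContinuousLinearMap.apply_eq_dotProduct, dotProduct_comm, dotProduct_mulVec,
    dotProduct_single_one]

end

theorem integral_vecMul_eq_sub_of_adjoint {n p : Type*} [Fintype n] [Fintype p] {t₀ tf : ℝ}
    (ht : t₀ ≤ tf) {A : ℝ → Matrix n n ℝ} {B : ℝ → Matrix n p ℝ}
    (hB : ContinuousOn B (Icc t₀ tf)) {s : ℝ → Matrix n p ℝ}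
    (hs : ∀ t ∈ Icc t₀ tf, HasDerivWithinAt s (A t * s t + B t) (Icc t₀ tf) t)
    {a : ℝ → n → ℝ}
    (ha : ∀ t ∈ Icc t₀ tf, HasDerivWithinAt a (-((A t)ᵀ *ᵥ a t)) (Icc t₀ tf) t) :
    ∫ t in t₀..tf, a t ᵥ* B t = a tf ᵥ* s tf - a t₀ ᵥ* s t₀ := by
  have hderiv (t) (ht : t ∈ Icc t₀ tf) := hasDerivWithinAt_vecMul_of_adjoint (ha t ht) (hs t ht)
  refine intervalIntegral.integral_eq_sub_of_hasDeriv_right_of_le ht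
    (fun t ht => (hderiv t ht).continuousWithinAt) (fun t ht => ?_) ?_
  · exact (hderiv t (Ioo_subset_Icc_self ht)).hasDerivAt (Icc_mem_nhds ht.1 ht.2)
      |>.hasDerivWithinAt
  · refine ContinuousOn.intervalIntegrable ?_
    rw [uIcc_of_le ht]
    exact ContinuousOn.matrix_vecMul (fun t ht => (ha t ht).continuousWithinAt) hB

theorem stmt_9_general (n p : ℕ) (t₀ tf : ℝ) (ht : t₀ ≤ tf)
    (A : ℝ → Matrix (Fin n) (Fin n) ℝ) (B : ℝ → Matrix (Fin n) (Fin p) ℝ)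
    (hB : ContinuousOn B (Set.Icc t₀ tf))
    (s : ℝ → Matrix (Fin n) (Fin p) ℝ) (hs0 : s t₀ = 0)
    (hs : ∀ t ∈ Set.Icc t₀ tf, HasDerivWithinAt s (A t * s t + B t) (Set.Icc t₀ tf) t)
    (X : (Fin p → ℝ) → (Fin n → ℝ)) (μ₀ : Fin p → ℝ)
    (hX : DifferentiableAt ℝ X μ₀)
    (hDX : ∀ v, fderiv ℝ X μ₀ v = Matrix.mulVec (s tf) v)
    (L : (Fin n → ℝ) → ℝ) (hL : DifferentiableAt ℝ L (X μ₀))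
    (a : ℝ → Fin n → ℝ)
    (ha : ∀ t ∈ Set.Icc t₀ tf,
      HasDerivWithinAt a (-(Matrix.mulVec (Matrix.transpose (A t)) (a t)))
        (Set.Icc t₀ tf) t)
    (haf : a tf = fun i => fderiv ℝ L (X μ₀) (Pi.single i 1)) :
    DifferentiableAt ℝ (fun μ => L (X μ)) μ₀ ∧
      (fun j => fderiv ℝ (fun μ => L (X μ)) μ₀ (Pi.single j 1)) =
        ∫ t in t₀..tf, Matrix.vecMul (a t) (B t) := by
  refine ⟨hL.comp μ₀ hX, ?_⟩
  rw [fderiv_comp_apply_single_eq_vecMul hL hX hDX, ← haf,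
    integral_vecMul_eq_sub_of_adjoint ht hB hs ha, hs0, vecMul_zero, sub_zero]

/-- Adjoint sensitivity method: if the final state `X(μ)` of the trajectory is differentiable
at `μ₀` with derivative given by the sensitivity matrix `s(t_f)` (where `s' = A s + B`,
`s(t₀) = 0`), the loss `L` is differentiable at `X(μ₀)`, and the adjoint state `a` solves
`a' = −Aᵀ a` with terminal condition `a(t_f) = ∇L(X(μ₀))`, then the composite loss
`F = L ∘ X` is differentiable at `μ₀` with gradient `∇F(μ₀)ᵀ = ∫_{t₀}^{t_f} a(t)ᵀ B(t) dt`. -/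
theorem stmt_9 (n p : ℕ) (hn : 1 ≤ n) (hp : 1 ≤ p) (t₀ tf : ℝ) (ht : t₀ ≤ tf)
    (A : ℝ → Matrix (Fin n) (Fin n) ℝ) (B : ℝ → Matrix (Fin n) (Fin p) ℝ)
    (hA : ContinuousOn A (Set.Icc t₀ tf)) (hB : ContinuousOn B (Set.Icc t₀ tf))
    (s : ℝ → Matrix (Fin n) (Fin p) ℝ) (hs0 : s t₀ = 0)
    (hs : ∀ t ∈ Set.Icc t₀ tf, HasDerivWithinAt s (A t * s t + B t) (Set.Icc t₀ tf) t)
    (X : (Fin p → ℝ) → (Fin n → ℝ)) (μ₀ : Fin p → ℝ)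
    (hX : DifferentiableAt ℝ X μ₀)
    (hDX : ∀ v, fderiv ℝ X μ₀ v = Matrix.mulVec (s tf) v)
    (L : (Fin n → ℝ) → ℝ) (hL : DifferentiableAt ℝ L (X μ₀))
    (a : ℝ → Fin n → ℝ)
    (ha : ∀ t ∈ Set.Icc t₀ tf,
      HasDerivWithinAt a (-(Matrix.mulVec (Matrix.transpose (A t)) (a t)))
        (Set.Icc t₀ tf) t)
    (haf : a tf = fun i => fderiv ℝ L (X μ₀) (Pi.single i 1)) :
    DifferentiableAt ℝ (fun μ => L (X μ)) μ₀ ∧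
      (fun j => fderiv ℝ (fun μ => L (X μ)) μ₀ (Pi.single j 1)) =
        ∫ t in t₀..tf, Matrix.vecMul (a t) (B t) :=
  stmt_9_general n p t₀ tf ht A B hB s hs0 hs X μ₀ hX hDX L hL a ha haf
end
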